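/- arXiv:0803.2026 — 4 statements merged into one kernel-verified Lean document; each statement's English description precedes it below -/
import Mathlib

section
/- Let f ∈ ℂ[x₁,…,xₙ] and let h ∈ ℂ[x₁,…,x_{n+1}] have zero constant term. Set g := f + x_{n+1}²·(1+h) ∈ ℂ[x₁,…,x_{n+1}], where f is viewed as a polynomial in n+1 variables via the inclusion of variables. Then the Tjurina algebra T_g, computed in ℂ[[x₁,…,x_{n+1}]], is isomorphic as a ℂ-algebra to the Tjurina algebra T_f, computed in ℂ[[x₁,…,xₙ]]. -/
open MvPolynomial

noncomputable section

/-- Two formal power series are *contact equivalent* if one is a unit times an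
algebra-automorphism image of the other. -/
def ContactEquiv {N : ℕ} (f g : MvPowerSeries (Fin N) ℂ) : Prop :=
  ∃ (φ : MvPowerSeries (Fin N) ℂ ≃ₐ[ℂ] MvPowerSeries (Fin N) ℂ)
    (u : (MvPowerSeries (Fin N) ℂ)ˣ), f = (u : MvPowerSeries (Fin N) ℂ) * φ g

/-- The Tjurina ideal ⟨f, ∂f/∂x₁, …, ∂f/∂x_N⟩ of a polynomial, as an ideal of the
formal power series ring. -/
def tjurinaIdeal {N : ℕ} (f : MvPolynomial (Fin N) ℂ) : Ideal (MvPowerSeries (Fin N) ℂ) :=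
  Ideal.span (insert (↑f) (Set.range fun i =>
    ((pderiv i f : MvPolynomial (Fin N) ℂ) : MvPowerSeries (Fin N) ℂ)))

/-- The Tjurina algebra ℂ[[x₁,…,x_N]]/⟨f, ∂f/∂x₁,…,∂f/∂x_N⟩. -/
abbrev TjurinaAlgebra {N : ℕ} (f : MvPolynomial (Fin N) ℂ) :=
  MvPowerSeries (Fin N) ℂ ⧸ tjurinaIdeal f

/-!
Write `g = f + x_{n+1}²(1 + h)`. Its last partial derivative is `x_{n+1} · w` with
`w = 2(1 + h) + x_{n+1} ∂h/∂x_{n+1}`, a unit of `ℂ[[x]]` because `h(0) = 0`; hence `x_{n+1}`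
lies in the Tjurina ideal of `g`. Setting `x_{n+1} = 0` is a surjection
`ℂ[[x₁,…,x_{n+1}]] → ℂ[[x₁,…,xₙ]]` with kernel `(x_{n+1})`, so it identifies `T_g` with the
quotient by the image of the Tjurina ideal of `g`. That image is generated by `f`, the
`∂f/∂x_j` and `0`, so it is the Tjurina ideal of `f`.
-/

def Ideal.quotientEquivAlgMapOfSurjective {R A B : Type*} [CommSemiring R]
    [CommRing A] [CommRing B] [Algebra R A] [Algebra R B] {φ : A →ₐ[R] B}
    (hφ : Function.Surjective φ) {I : Ideal A} (hI : RingHom.ker φ ≤ I) :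
    (A ⧸ I) ≃ₐ[R] B ⧸ I.map φ :=
  have hker : RingHom.ker ((Ideal.Quotient.mkₐ R (I.map φ)).comp φ) = I := by
    ext x
    rw [RingHom.mem_ker, AlgHom.comp_apply, Ideal.Quotient.mkₐ_eq_mk,
      Ideal.Quotient.eq_zero_iff_mem, ← Ideal.mem_comap, Ideal.comap_map_of_surjective' φ hφ,
      sup_eq_left.2 hI]
  (Ideal.quotientEquivAlgOfEq R hker.symm).trans
    (Ideal.quotientKerAlgEquivOfSurjective ((Ideal.Quotient.mkₐ_surjective R _).comp hφ))

lemma MvPolynomial.pderiv_rename_of_notMem_range {σ τ R : Type*} [CommSemiring R] {f : σ → τ}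
    {i : τ} (hi : i ∉ Set.range f) (p : MvPolynomial σ R) : pderiv i (rename f p) = 0 := by
  classical
  refine pderiv_eq_zero_of_notMem_vars fun hmem => hi ?_
  obtain ⟨j, -, rfl⟩ := Finset.mem_image.1 (vars_rename f p hmem)
  exact ⟨j, rfl⟩

lemma MvPolynomial.isUnit_coe_iff_isUnit_constantCoeff {σ R : Type*} [CommRing R]
    {p : MvPolynomial σ R} : IsUnit (p : MvPowerSeries σ R) ↔ IsUnit (constantCoeff p) := by
  rw [MvPowerSeries.isUnit_iff_constantCoeff, ← MvPowerSeries.coeff_zero_eq_constantCoeff_apply,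
    coeff_coe]
  rfl

namespace MvPowerSeries

lemma X_dvd_sub_rename_killCompl {σ τ R : Type*} [CommRing R] {e : σ ↪ τ} {t : τ}
    (ht : ∀ s, s ≠ t → s ∈ Set.range e) (p : MvPowerSeries τ R) :
    X t ∣ p - rename e (killCompl e p) := by
  refine X_dvd_iff.2 fun m hm => ?_
  obtain ⟨m, rfl⟩ : m ∈ Set.range (Finsupp.embDomain e) := by
    rw [Finsupp.mem_range_embDomain_iff]
    intro s hs
    exact ht s (by rintro rfl; exact Finsupp.mem_support_iff.1 hs hm)
  rw [map_sub, coeff_embDomain_rename, coeff_killCompl, sub_self]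

variable {R : Type*} [CommRing R] {n : ℕ}

lemma killCompl_castSuccEmb_coe_rename (p : MvPolynomial (Fin n) R) :
    killCompl Fin.castSuccEmb (p.rename Fin.castSucc : MvPowerSeries (Fin (n + 1)) R) = p := by
  rw [← Fin.coe_castSuccEmb, ← rename_coe, killCompl_rename_app]

lemma killCompl_castSuccEmb_X_last :
    killCompl (R := R) Fin.castSuccEmb (X (Fin.last n)) = 0 :=
  killCompl_X_eq_zero (by simp [Fin.range_castSucc])

end MvPowerSeries

open MvPowerSeries (killCompl_castSuccEmb_coe_rename killCompl_castSuccEmb_X_last)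

section Stabilization

variable {R : Type*} [CommRing R] {n : ℕ}

def stabilization (f : MvPolynomial (Fin n) R) (h : MvPolynomial (Fin (n + 1)) R) :
    MvPolynomial (Fin (n + 1)) R :=
  rename Fin.castSucc f + X (Fin.last n) ^ 2 * (1 + h)

variable (f : MvPolynomial (Fin n) R) (h : MvPolynomial (Fin (n + 1)) R)

lemma pderiv_last_stabilization : pderiv (Fin.last n) (stabilization f h) =
    X (Fin.last n) * (2 * (1 + h) + X (Fin.last n) * pderiv (Fin.last n) h) := by
  rw [stabilization, map_add, pderiv_rename_of_notMem_range (by simp [Fin.range_castSucc]),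
    pderiv_mul, pderiv_pow, pderiv_X_self, map_add, pderiv_one]
  push_cast
  ring

lemma pderiv_castSucc_stabilization (j : Fin n) : pderiv j.castSucc (stabilization f h) =
    rename Fin.castSucc (pderiv j f) + X (Fin.last n) ^ 2 * pderiv j.castSucc h := by
  rw [stabilization, map_add, pderiv_rename (Fin.castSucc_injective n), pderiv_mul, pderiv_pow,
    pderiv_X_of_ne (Fin.castSucc_lt_last j).ne', map_add, pderiv_one]
  ring

lemma killCompl_coe_stabilization :
    MvPowerSeries.killCompl Fin.castSuccEmb
      (stabilization f h : MvPowerSeries (Fin (n + 1)) R) = f := by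
  rw [stabilization]
  push_cast
  rw [map_add, map_mul, map_pow, killCompl_castSuccEmb_coe_rename, killCompl_castSuccEmb_X_last]
  ring

lemma killCompl_coe_pderiv_castSucc_stabilization (j : Fin n) :
    MvPowerSeries.killCompl Fin.castSuccEmb
      (pderiv j.castSucc (stabilization f h) : MvPowerSeries (Fin (n + 1)) R) = pderiv j f := by
  rw [pderiv_castSucc_stabilization]
  push_cast
  rw [map_add, map_mul, map_pow, killCompl_castSuccEmb_coe_rename, killCompl_castSuccEmb_X_last]
  ring

lemma killCompl_coe_pderiv_last_stabilization :
    MvPowerSeries.killCompl Fin.castSuccEmb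
      (pderiv (Fin.last n) (stabilization f h) : MvPowerSeries (Fin (n + 1)) R) = 0 := by
  rw [pderiv_last_stabilization]
  push_cast
  rw [map_mul, killCompl_castSuccEmb_X_last, zero_mul]

end Stabilization

section Tjurina

variable {N n : ℕ}

lemma coe_mem_tjurinaIdeal (f : MvPolynomial (Fin N) ℂ) :
    (f : MvPowerSeries (Fin N) ℂ) ∈ tjurinaIdeal f :=
  Ideal.subset_span (Set.mem_insert _ _)

lemma coe_pderiv_mem_tjurinaIdeal (f : MvPolynomial (Fin N) ℂ) (i : Fin N) :
    (pderiv i f : MvPowerSeries (Fin N) ℂ) ∈ tjurinaIdeal f :=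
  Ideal.subset_span (Set.mem_insert_of_mem _ ⟨i, rfl⟩)

lemma nonempty_tjurinaAlgebra_equiv_of_X_last_mem {f : MvPolynomial (Fin n) ℂ}
    {g : MvPolynomial (Fin (n + 1)) ℂ} (hX : MvPowerSeries.X (Fin.last n) ∈ tjurinaIdeal g)
    (hmap : (tjurinaIdeal g).map (MvPowerSeries.killCompl Fin.castSuccEmb) = tjurinaIdeal f) :
    Nonempty (TjurinaAlgebra g ≃ₐ[ℂ] TjurinaAlgebra f) := by
  set κ := MvPowerSeries.killCompl (R := ℂ) (Fin.castSuccEmb (n := n))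
  have hsurj : Function.Surjective κ := fun p => ⟨_, MvPowerSeries.killCompl_rename_app p⟩
  have hker : RingHom.ker κ ≤ tjurinaIdeal g := by
    intro p hp
    obtain ⟨q, hq⟩ := MvPowerSeries.X_dvd_sub_rename_killCompl (R := ℂ) (e := Fin.castSuccEmb)
      (t := Fin.last n) (fun s hs => ⟨s.castPred hs, Fin.castSucc_castPred s hs⟩) p
    rw [RingHom.mem_ker.1 hp, map_zero, sub_zero] at hq
    rw [hq]
    exact Ideal.mul_mem_right q _ hX
  exact ⟨(Ideal.quotientEquivAlgMapOfSurjective hsurj hker).trans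
    (Ideal.quotientEquivAlgOfEq ℂ hmap)⟩

variable (f : MvPolynomial (Fin n) ℂ) (h : MvPolynomial (Fin (n + 1)) ℂ)

lemma X_last_mem_tjurinaIdeal_stabilization (hh0 : constantCoeff h = 0) :
    MvPowerSeries.X (Fin.last n) ∈ tjurinaIdeal (stabilization f h) := by
  have hunit : IsUnit ((2 * (1 + h) + X (Fin.last n) * pderiv (Fin.last n) h :
      MvPolynomial (Fin (n + 1)) ℂ) : MvPowerSeries (Fin (n + 1)) ℂ) := by
    rw [isUnit_coe_iff_isUnit_constantCoeff]
    simp [hh0, map_ofNat]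
  refine (Ideal.mul_unit_mem_iff_mem _ hunit).1 ?_
  rw [← coe_X, ← coe_mul, ← pderiv_last_stabilization]
  exact coe_pderiv_mem_tjurinaIdeal _ _

lemma map_killCompl_tjurinaIdeal_stabilization :
    (tjurinaIdeal (stabilization f h)).map (MvPowerSeries.killCompl Fin.castSuccEmb) =
      tjurinaIdeal f := by
  refine le_antisymm (Ideal.map_le_iff_le_comap.2 (Ideal.span_le.2 ?_)) (Ideal.span_le.2 ?_)
  · rintro _ (rfl | ⟨i, rfl⟩)
    · simpa [killCompl_coe_stabilization] using coe_mem_tjurinaIdeal f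
    · induction i using Fin.lastCases with
      | last => simp [killCompl_coe_pderiv_last_stabilization]
      | cast j =>
        simpa [killCompl_coe_pderiv_castSucc_stabilization] using coe_pderiv_mem_tjurinaIdeal f j
  · rintro _ (rfl | ⟨j, rfl⟩)
    · rw [SetLike.mem_coe, ← killCompl_coe_stabilization f h]
      exact Ideal.mem_map_of_mem _ (coe_mem_tjurinaIdeal _)
    · show (pderiv j f : MvPowerSeries (Fin n) ℂ) ∈ _
      rw [← killCompl_coe_pderiv_castSucc_stabilization f h j]
      exact Ideal.mem_map_of_mem _ (coe_pderiv_mem_tjurinaIdeal _ _)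

end Tjurina

/-- Adding a square of a new variable (times a unit 1 + h) does not change the Tjurina
algebra: T_{f + x_{n+1}²(1+h)} ≅ T_f as ℂ-algebras. -/
theorem statement_4 {n : ℕ} (f : MvPolynomial (Fin n) ℂ)
    (h : MvPolynomial (Fin (n + 1)) ℂ) (hh0 : constantCoeff h = 0)
    (g : MvPolynomial (Fin (n + 1)) ℂ)
    (hg : g = rename Fin.castSucc f + X (Fin.last n) ^ 2 * (1 + h)) :
    Nonempty (TjurinaAlgebra g ≃ₐ[ℂ] TjurinaAlgebra f) := by
  subst hg
  exact nonempty_tjurinaAlgebra_equiv_of_X_last_mem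
    (X_last_mem_tjurinaIdeal_stabilization f h hh0) (map_killCompl_tjurinaIdeal_stabilization f h)
end
end

section
/- Let n ≥ 1, let α₁,…,αₙ and d be integers with 2 ≤ αᵢ ≤ d for all i, and let λ₁,…,λₙ ∈ ℂ satisfy αᵢ + d·λᵢ ≠ 0 for every i with αᵢ = d. Set f := Σᵢ xᵢ^{αᵢ} + Σᵢ λᵢ·xᵢ^d ∈ ℂ[x₁,…,xₙ]. Then the Tjurina ideal of f in ℂ[[x₁,…,xₙ]] equals the monomial ideal ⟨x₁^{α₁−1},…,xₙ^{αₙ−1}⟩, and consequently the Tjurina number satisfies τ(f) = ∏ᵢ (αᵢ − 1). -/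
open MvPolynomial

noncomputable section

/-!
Each partial derivative of `f = Σ xᵢ^{αᵢ} + Σ λᵢ xᵢ^d` factors as
`∂f/∂xᵢ = xᵢ^{αᵢ-1} · (αᵢ + dλᵢ xᵢ^{d-αᵢ})`, and the second factor has nonzero constant term,
so it is a unit in the power series ring. Hence the partials generate `⟨xᵢ^{αᵢ-1}⟩`, which
also contains `f`. A series lies in this monomial ideal iff its coefficients vanish on the box
`{e | eᵢ < αᵢ - 1}`, so the quotient is the space of functions on the box.
-/

theorem Ideal.span_range_eq_of_associated {R ι : Type*} [CommSemiring R] {f g : ι → R}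
    (h : ∀ i, Associated (f i) (g i)) :
    Ideal.span (Set.range f) = Ideal.span (Set.range g) := by
  apply le_antisymm <;> rw [Ideal.span_le] <;> rintro _ ⟨i, rfl⟩
  · exact Ideal.mem_of_dvd _ (h i).symm.dvd (Ideal.subset_span ⟨i, rfl⟩)
  · exact Ideal.mem_of_dvd _ (h i).dvd (Ideal.subset_span ⟨i, rfl⟩)

namespace MvPowerSeries

variable {σ R : Type*} [Fintype σ]

theorem mem_span_range_X_pow_iff [CommSemiring R] {β : σ → ℕ} {g : MvPowerSeries σ R} :
    g ∈ Ideal.span (Set.range fun i => (X i : MvPowerSeries σ R) ^ β i) ↔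
      ∀ e : σ →₀ ℕ, (∀ i, e i < β i) → coeff e g = 0 := by
  classical
  let : LinearOrder σ := LinearOrder.lift' _ (Fintype.equivFin σ).injective
  constructor
  · intro hg e he
    obtain ⟨c, rfl⟩ := Ideal.mem_span_range_iff_exists_fun.mp hg
    rw [map_sum]
    exact Finset.sum_eq_zero fun i _ => X_pow_dvd_iff.mp (dvd_mul_left _ _) e (he i)
  · intro hg
    -- Split `g` by the first coordinate in which the exponent leaves the box; the piece
    -- belonging to `i` is divisible by `X i ^ β i`.
    let IsFirst (e : σ →₀ ℕ) (i : σ) : Prop := β i ≤ e i ∧ ∀ j < i, e j < β j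
    let part (i : σ) : MvPowerSeries σ R := fun e => if IsFirst e i then coeff e g else 0
    have hpart : g = ∑ i, part i := by
      ext e
      rw [map_sum]
      by_cases he : ∀ i, e i < β i
      · rw [hg e he]
        exact (Finset.sum_eq_zero fun i _ => if_neg fun h => (h.1.trans_lt (he i)).false).symm
      · push Not at he
        obtain ⟨i₀, hi₀, hmin⟩ := wellFounded_lt.has_min {i | β i ≤ e i} he
        have hfirst : ∀ i, IsFirst e i ↔ i = i₀ := by
          refine fun i => ⟨fun hi => ?_,
            fun h => h ▸ ⟨hi₀, fun j hj => not_le.mp fun h' => hmin j h' hj⟩⟩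
          rcases lt_trichotomy i i₀ with h | h | h
          · exact absurd h (hmin i hi.1)
          · exact h
          · exact absurd hi₀ (not_le.mpr (hi.2 i₀ h))
        change coeff e g = ∑ i, if IsFirst e i then coeff e g else 0
        simp only [hfirst, Finset.sum_ite_eq', Finset.mem_univ, if_true]
    rw [hpart]
    refine Ideal.sum_mem _ fun i _ => Ideal.mem_of_dvd _ ?_ (Ideal.subset_span ⟨i, rfl⟩)
    exact X_pow_dvd_iff.mpr fun e he => if_neg fun h => (h.1.trans_lt he).false

theorem finrank_quotient_span_range_X_pow [CommRing R] [Nontrivial R] (β : σ → ℕ) :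
    Module.finrank R
      (MvPowerSeries σ R ⧸ Ideal.span (Set.range fun i => (X i : MvPowerSeries σ R) ^ β i)) =
        ∏ i, β i := by
  classical
  set J := Ideal.span (Set.range fun i => (X i : MvPowerSeries σ R) ^ β i)
  let exponent (v : (i : σ) → Fin (β i)) : σ →₀ ℕ := Finsupp.equivFunOnFinite.symm fun i => v i
  have exponent_injective : Function.Injective exponent := fun v w h =>
    funext fun i => Fin.ext (DFunLike.congr_fun h i)
  let π : MvPowerSeries σ R →ₗ[R] ((i : σ) → Fin (β i)) → R :=
    LinearMap.pi fun v => coeff (exponent v)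
  have hker : LinearMap.ker π = J.restrictScalars R := by
    ext g
    simp only [LinearMap.mem_ker, Submodule.restrictScalars_mem, J, mem_span_range_X_pow_iff,
      funext_iff]
    refine ⟨fun h e he => ?_, fun h v => h _ fun i => (v i).isLt⟩
    have hv : exponent (fun i => ⟨e i, he i⟩) = e := Finsupp.ext fun _ => rfl
    simpa [π, hv] using h fun i => ⟨e i, he i⟩
  have hsurj : Function.Surjective π := by
    intro c
    refine ⟨∑ v, monomial (exponent v) (c v), funext fun w => ?_⟩
    simp [π, coeff_monomial, exponent_injective.eq_iff]
  let e : (MvPowerSeries σ R ⧸ J) ≃ₗ[R] ((i : σ) → Fin (β i)) → R :=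
    ((Submodule.Quotient.restrictScalarsEquiv R J).symm.trans
      (Submodule.quotEquivOfEq _ _ hker.symm)).trans (π.quotKerEquivOfSurjective hsurj)
  rw [e.finrank_eq, Module.finrank_fintype_fun_eq_card, Fintype.card_pi]
  simp

end MvPowerSeries

namespace MvPolynomial

variable {σ R : Type*} [Fintype σ]

theorem pderiv_sum_C_mul_X_pow [CommSemiring R] (c : σ → R) (a : σ → ℕ) (i : σ) :
    pderiv i (∑ j, C (c j) * X j ^ a j) = C (c i * a i) * X i ^ (a i - 1) := by
  classical
  simp [pderiv_X, Pi.single_apply, mul_assoc]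

theorem pderiv_sum_X_pow_add_sum_C_mul_X_pow [CommSemiring R] {α : σ → ℕ} {d : ℕ}
    (lam : σ → R) {i : σ} (hα1 : 1 ≤ α i) (hαd : α i ≤ d) :
    pderiv i (∑ j, X j ^ α j + ∑ j, C (lam j) * X j ^ d) =
      X i ^ (α i - 1) * (C (α i : R) + C (d * lam i) * X i ^ (d - α i)) := by
  have hpow : (X i : MvPolynomial σ R) ^ (d - 1) = X i ^ (α i - 1) * X i ^ (d - α i) := by
    rw [← pow_add]; congr 1; omega
  have h := pderiv_sum_C_mul_X_pow (fun _ => (1 : R)) α i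
  simp only [C_1, one_mul] at h
  rw [map_add, h, pderiv_sum_C_mul_X_pow, hpow]
  simp only [mul_comm (lam i)]
  ring

variable {K : Type*} [Field K] [CharZero K]

theorem associated_X_pow_coe_pderiv {α : σ → ℕ} {d : ℕ} (lam : σ → K) {i : σ}
    (hα1 : 1 ≤ α i) (hαd : α i ≤ d) (hlam : α i = d → (α i : K) + d * lam i ≠ 0) :
    Associated (MvPowerSeries.X i ^ (α i - 1))
      ((pderiv i (∑ j, X j ^ α j + ∑ j, C (lam j) * X j ^ d) : MvPolynomial σ K) :
        MvPowerSeries σ K) := by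
  rw [pderiv_sum_X_pow_add_sum_C_mul_X_pow lam hα1 hαd]
  push_cast
  refine associated_mul_unit_right _ _ (MvPowerSeries.isUnit_iff_constantCoeff.mpr ?_)
  rw [isUnit_iff_ne_zero]
  simp only [map_add, map_mul, map_pow, MvPowerSeries.constantCoeff_C,
    MvPowerSeries.constantCoeff_X]
  rcases hαd.lt_or_eq with hlt | heq
  · rw [zero_pow (by omega), mul_zero, add_zero]
    exact_mod_cast (by omega : α i ≠ 0)
  · rw [heq, Nat.sub_self, pow_zero, mul_one]
    exact heq ▸ hlam heq

theorem coe_sum_X_pow_add_sum_C_mul_X_pow_mem [CommSemiring R] {α : σ → ℕ} {d : ℕ}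
    (lam : σ → R) (hαd : ∀ i, α i ≤ d) :
    ((∑ j, X j ^ α j + ∑ j, C (lam j) * X j ^ d : MvPolynomial σ R) : MvPowerSeries σ R) ∈
      Ideal.span (Set.range fun i => (MvPowerSeries.X i : MvPowerSeries σ R) ^ (α i - 1)) := by
  have hmem : ∀ i m, α i - 1 ≤ m →
      (MvPowerSeries.X i : MvPowerSeries σ R) ^ m ∈
        Ideal.span (Set.range fun i => (MvPowerSeries.X i : MvPowerSeries σ R) ^ (α i - 1)) :=
    fun i m h => Ideal.mem_of_dvd _ (pow_dvd_pow _ h) (Ideal.subset_span ⟨i, rfl⟩)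
  rw [← coeToMvPowerSeries.ringHom_apply]
  simp only [map_add, map_sum, map_mul, map_pow, coeToMvPowerSeries.ringHom_apply, coe_X, coe_C]
  exact Ideal.add_mem _ (Ideal.sum_mem _ fun i _ => hmem i _ (Nat.sub_le _ _))
    (Ideal.sum_mem _ fun i _ => Ideal.mul_mem_left _ _ (hmem i _ ((Nat.sub_le _ _).trans (hαd i))))

end MvPolynomial

theorem statement_11_general {n : ℕ} (α : Fin n → ℕ) (d : ℕ)
    (hα2 : ∀ i, 2 ≤ α i) (hαd : ∀ i, α i ≤ d)
    (lam : Fin n → ℂ) (hlam : ∀ i, α i = d → (α i : ℂ) + d * lam i ≠ 0)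
    (f : MvPolynomial (Fin n) ℂ)
    (hf : f = ∑ i, X i ^ α i + ∑ i, C (lam i) * X i ^ d) :
    tjurinaIdeal f =
      Ideal.span (Set.range fun i => (MvPowerSeries.X i : MvPowerSeries (Fin n) ℂ) ^ (α i - 1)) ∧
    Module.finrank ℂ (TjurinaAlgebra f) = ∏ i, (α i - 1) := by
  have hideal : tjurinaIdeal f =
      Ideal.span (Set.range fun i => (MvPowerSeries.X i : MvPowerSeries _ ℂ) ^ (α i - 1)) := by
    subst hf
    have hpartials := Ideal.span_range_eq_of_associated
      fun i => associated_X_pow_coe_pderiv lam (one_le_two.trans (hα2 i)) (hαd i) (hlam i)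
    rw [tjurinaIdeal, Ideal.span_insert, ← hpartials, sup_eq_right, Ideal.span_singleton_le_iff_mem]
    exact coe_sum_X_pow_add_sum_C_mul_X_pow_mem lam hαd
  refine ⟨hideal, ?_⟩
  unfold TjurinaAlgebra
  rw [hideal]
  exact MvPowerSeries.finrank_quotient_span_range_X_pow _

/-- For f = Σᵢ xᵢ^{αᵢ} + Σᵢ λᵢ xᵢ^d with 2 ≤ αᵢ ≤ d and αᵢ + d·λᵢ ≠ 0 whenever αᵢ = d,
the Tjurina ideal of f equals the monomial ideal ⟨x₁^{α₁−1}, …, xₙ^{αₙ−1}⟩ and the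
Tjurina number is τ(f) = Πᵢ (αᵢ − 1). -/
theorem statement_11 {n : ℕ} (hn : 1 ≤ n) (α : Fin n → ℕ) (d : ℕ)
    (hα2 : ∀ i, 2 ≤ α i) (hαd : ∀ i, α i ≤ d)
    (lam : Fin n → ℂ) (hlam : ∀ i, α i = d → (α i : ℂ) + d * lam i ≠ 0)
    (f : MvPolynomial (Fin n) ℂ)
    (hf : f = ∑ i, X i ^ α i + ∑ i, C (lam i) * X i ^ d) :
    tjurinaIdeal f =
      Ideal.span (Set.range fun i => (MvPowerSeries.X i : MvPowerSeries (Fin n) ℂ) ^ (α i - 1)) ∧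
    Module.finrank ℂ (TjurinaAlgebra f) = ∏ i, (α i - 1) :=
  statement_11_general α d hα2 hαd lam hlam f hf
end
end

section
/- Let n ≥ 1, let α₁,…,αₙ and d be integers with 2 ≤ αᵢ ≤ d for all i, and let λ₁,…,λₙ ∈ ℂ satisfy αᵢ + d·λᵢ ≠ 0 for every i with αᵢ = d. Then the polynomial f := Σᵢ xᵢ^{αᵢ} + Σᵢ λᵢ·xᵢ^d is contact equivalent in ℂ[[x₁,…,xₙ]] to the canonical quasihomogeneous polynomial Σᵢ xᵢ^{αᵢ}. -/
/-!
Each summand of `f` involves a single variable, and `x ^ α + λ x ^ d = (x r(x)) ^ α` where `r` is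
an `α`-th root of the unit `1 + λ x ^ (d - α)`, obtained from the binomial series `(1 + t) ^ (1/α)`.
When `α = d` this unit is the constant `1 + λ`, which is nonzero by hypothesis. Since `x r(x)` is
tangent to a nonzero multiple of `x`, it has a compositional inverse, so substituting `x_i r_i(x_i)`
for each `x_i` is an automorphism; it maps `Σ x_i ^ α_i` to `f`, and the unit can be taken to be `1`.
-/

open MvPolynomial

noncomputable section

namespace PowerSeries

section Binomial

variable {R : Type*} [CommRing R] [BinomialRing R] {A : Type*} [CommRing A] [Algebra R A]

lemma binomialSeries_nsmul (r : R) (m : ℕ) :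
    binomialSeries A (m • r) = binomialSeries A r ^ m := by
  induction m with
  | zero => simp
  | succ m ih => rw [succ_nsmul, binomialSeries_add, ih, pow_succ]

end Binomial

section Roots

variable {k : Type*} [Field k] [CharZero k]

lemma exists_pow_eq_of_constantCoeff_eq_one {F : k⟦X⟧} (hF : constantCoeff F = 1)
    {α : ℕ} (hα : α ≠ 0) : ∃ G : k⟦X⟧, G ^ α = F := by
  have hsub : HasSubst (F - 1) := HasSubst.of_constantCoeff_zero' (by simp [hF])
  refine ⟨(binomialSeries k (α⁻¹ : k)).subst (F - 1), ?_⟩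
  have hone : binomialSeries k (1 : k) = 1 + X := by
    simpa using binomialSeries_nat (R := k) (A := k) 1
  rw [← subst_pow hsub, ← binomialSeries_nsmul, nsmul_eq_mul,
    mul_inv_cancel₀ (Nat.cast_ne_zero.mpr hα), hone, subst_add hsub, subst_X hsub,
    ← map_one (C (R := k)), subst_C]
  simp

lemma exists_pow_eq_of_constantCoeff_ne_zero [IsAlgClosed k] {F : k⟦X⟧}
    (hF : constantCoeff F ≠ 0) {α : ℕ} (hα : α ≠ 0) : ∃ G : k⟦X⟧, G ^ α = F := by
  obtain ⟨c, hc⟩ := IsAlgClosed.exists_pow_nat_eq (constantCoeff F) (Nat.pos_of_ne_zero hα)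
  obtain ⟨G, hG⟩ := exists_pow_eq_of_constantCoeff_eq_one
    (F := C (constantCoeff F)⁻¹ * F) (by simp [hF]) hα
  refine ⟨C c * G, ?_⟩
  rw [mul_pow, hG, ← map_pow, hc, ← mul_assoc, ← map_mul, mul_inv_cancel₀ hF, map_one, one_mul]

lemma exists_pow_eq_X_pow_add_C_mul_X_pow [IsAlgClosed k] {α d : ℕ} (hα : α ≠ 0)
    (hαd : α ≤ d) {c : k} (hc : α = d → (α : k) + d * c ≠ 0) :
    ∃ P : k⟦X⟧, constantCoeff P = 0 ∧ IsUnit (coeff 1 P) ∧ P ^ α = X ^ α + C c * X ^ d := by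
  have hunit : constantCoeff (1 + C c * X ^ (d - α) : k⟦X⟧) ≠ 0 := by
    rcases Nat.eq_zero_or_pos (d - α) with hdα | hdα
    · have hd : α = d := by omega
      have : (α : k) + d * c = α * (1 + c) := by rw [hd]; ring
      simpa [hdα, this, hα] using hc hd
    · simp [zero_pow hdα.ne']
  obtain ⟨r, hr⟩ := exists_pow_eq_of_constantCoeff_ne_zero hunit hα
  have hr₀ : constantCoeff r ≠ 0 := fun h ↦ hunit (by rw [← hr, map_pow, h, zero_pow hα])
  refine ⟨X * r, by simp, ?_, ?_⟩
  · rw [coeff_succ_X_mul, coeff_zero_eq_constantCoeff_apply]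
    exact hr₀.isUnit
  · rw [mul_pow, hr, mul_add, mul_one, mul_left_comm, ← pow_add, Nat.add_sub_cancel' hαd]

end Roots

end PowerSeries

namespace MvPowerSeries

variable {σ R : Type*} [CommRing R]

lemma hasSubst_toMvPowerSeries {P : σ → PowerSeries R}
    (hP : ∀ i, PowerSeries.constantCoeff (P i) = 0) :
    HasSubst fun i ↦ (P i).toMvPowerSeries i where
  const_coeff i := by
    rw [PowerSeries.toMvPowerSeries_eq_subst,
      PowerSeries.constantCoeff_subst_eq_zero (constantCoeff_X i) _ (hP i)]
    exact IsNilpotent.zero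
  coeff_zero d := d.support.finite_toSet.subset fun i hi ↦ by
    contrapose hi
    simpa using PowerSeries.toMvPowerSeries_coeff_eq_zero (by simpa using hi) (hP i)

/-- The substitution `X i ↦ P i (X i)`. -/
def substCoordwise (P : σ → PowerSeries R)
    (hP : ∀ i, PowerSeries.constantCoeff (P i) = 0) :
    MvPowerSeries σ R →ₐ[R] MvPowerSeries σ R :=
  substAlgHom (hasSubst_toMvPowerSeries hP)

lemma substCoordwise_comp {P Q : σ → PowerSeries R}
    (hP : ∀ i, PowerSeries.constantCoeff (P i) = 0)
    (hQ : ∀ i, PowerSeries.constantCoeff (Q i) = 0)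
    (hPQ : ∀ i, (P i).subst (Q i) = PowerSeries.X) :
    (substCoordwise Q hQ).comp (substCoordwise P hP) = AlgHom.id R _ := by
  have hsubst : (fun i ↦ subst (fun j ↦ (Q j).toMvPowerSeries j) ((P i).toMvPowerSeries i))
      = X := by
    funext i
    rw [PowerSeries.subst_toMvPowerSeries (hasSubst_toMvPowerSeries hQ),
      PowerSeries.toMvPowerSeries_eq_subst,
      ← PowerSeries.subst_comp_subst_apply (PowerSeries.HasSubst.of_constantCoeff_zero' (hQ i))
        (PowerSeries.HasSubst.X i), hPQ i, PowerSeries.subst_X (PowerSeries.HasSubst.X i)]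
  ext F : 1
  simp only [substCoordwise, AlgHom.comp_apply, substAlgHom_apply, AlgHom.id_apply]
  rw [subst_comp_subst_apply (hasSubst_toMvPowerSeries hP) (hasSubst_toMvPowerSeries hQ),
    hsubst, subst_self, id]

def substCoordwiseEquiv (P : σ → PowerSeries R)
    (hP₀ : ∀ i, PowerSeries.constantCoeff (P i) = 0)
    (hP₁ : ∀ i, IsUnit (PowerSeries.coeff 1 (P i))) :
    MvPowerSeries σ R ≃ₐ[R] MvPowerSeries σ R :=
  AlgEquiv.ofAlgHom (substCoordwise P hP₀)
    (substCoordwise (fun i ↦ (P i).substInvOfIsUnit (hP₁ i))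
      fun _ ↦ PowerSeries.constantCoeff_substInvOfIsUnit _ _)
    (substCoordwise_comp _ _ fun i ↦ PowerSeries.subst_substInvOfIsUnit_left _ (hP₀ i) _)
    (substCoordwise_comp _ _ fun i ↦ PowerSeries.subst_substInvOfIsUnit_right _ (hP₀ i) _)

lemma substCoordwiseEquiv_X (P : σ → PowerSeries R)
    (hP₀ : ∀ i, PowerSeries.constantCoeff (P i) = 0)
    (hP₁ : ∀ i, IsUnit (PowerSeries.coeff 1 (P i))) (i : σ) :
    substCoordwiseEquiv P hP₀ hP₁ (X i) = (P i).toMvPowerSeries i :=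
  substAlgHom_X (hasSubst_toMvPowerSeries hP₀) i

end MvPowerSeries

theorem statement_12_general {n : ℕ} (α : Fin n → ℕ) (d : ℕ)
    (hα2 : ∀ i, 2 ≤ α i) (hαd : ∀ i, α i ≤ d)
    (lam : Fin n → ℂ) (hlam : ∀ i, α i = d → (α i : ℂ) + d * lam i ≠ 0)
    (f : MvPolynomial (Fin n) ℂ)
    (hf : f = ∑ i, X i ^ α i + ∑ i, C (lam i) * X i ^ d) :
    ContactEquiv (f : MvPowerSeries (Fin n) ℂ)
      ((∑ i, X i ^ α i : MvPolynomial (Fin n) ℂ) : MvPowerSeries (Fin n) ℂ) := by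
  choose P hP₀ hP₁ hP using fun i ↦
    PowerSeries.exists_pow_eq_X_pow_add_C_mul_X_pow (by have := hα2 i; omega) (hαd i) (hlam i)
  set φ := MvPowerSeries.substCoordwiseEquiv P hP₀ hP₁
  have hφ (i : Fin n) : φ (MvPowerSeries.X i ^ α i)
      = MvPowerSeries.X i ^ α i + MvPowerSeries.C (lam i) * MvPowerSeries.X i ^ d := by
    rw [map_pow, MvPowerSeries.substCoordwiseEquiv_X, ← map_pow, hP, map_add, map_mul,
      map_pow, map_pow, PowerSeries.toMvPowerSeries_X, PowerSeries.toMvPowerSeries_C]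
  refine ⟨φ, 1, ?_⟩
  rw [hf, Units.val_one, one_mul, ← coeToMvPowerSeries.ringHom_apply, map_add, map_sum, map_sum,
    ← coeToMvPowerSeries.ringHom_apply, map_sum, map_sum, ← Finset.sum_add_distrib]
  simp only [map_pow, map_mul, coeToMvPowerSeries.ringHom_apply, coe_X, coe_C, hφ]

/-- f = Σᵢ xᵢ^{αᵢ} + Σᵢ λᵢ xᵢ^d (with 2 ≤ αᵢ ≤ d and αᵢ + d·λᵢ ≠ 0 whenever αᵢ = d) is
contact equivalent to the canonical quasihomogeneous polynomial Σᵢ xᵢ^{αᵢ}. -/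
theorem statement_12 {n : ℕ} (hn : 1 ≤ n) (α : Fin n → ℕ) (d : ℕ)
    (hα2 : ∀ i, 2 ≤ α i) (hαd : ∀ i, α i ≤ d)
    (lam : Fin n → ℂ) (hlam : ∀ i, α i = d → (α i : ℂ) + d * lam i ≠ 0)
    (f : MvPolynomial (Fin n) ℂ)
    (hf : f = ∑ i, X i ^ α i + ∑ i, C (lam i) * X i ^ d) :
    ContactEquiv (f : MvPowerSeries (Fin n) ℂ)
      ((∑ i, X i ^ α i : MvPolynomial (Fin n) ℂ) : MvPowerSeries (Fin n) ℂ) :=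
  statement_12_general α d hα2 hαd lam hlam f hf
end
end

section
/- Let n ≥ 1 and let α₁,…,αₙ be integers with αᵢ ≥ 2 for all i, and set d := (Σᵢ αᵢ) − (2n+1); assume d ≥ 0. Consider the ℂ-linear map from the subspace of polynomials in ℂ[x₁,…,xₙ] of total degree ≤ d to the quotient ring ℂ[[x₁,…,xₙ]]/⟨x₁^{α₁−1},…,xₙ^{αₙ−1}⟩, obtained by composing the inclusion of polynomials into the formal power series ring with the quotient projection. Then the cokernel of this map has ℂ-dimension exactly 1, while the analogous map from the subspace of polynomials of total degree ≤ d+1 is surjective. (This computes h¹(J_{Z^{ea}(H)/ℙⁿ}(d)) = 1 and h¹(J_{Z^{ea}(H)/ℙⁿ}(d+1)) = 0 for the hypersurface H of Theorem 3.1.) -/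
/-!
Put `M i = α i - 2`. A power series lies in `⟨x_i ^ (M i + 1)⟩` iff its coefficients vanish on
the box `m ≤ M`, so the quotient only sees the coefficients in the box, whose top corner `x ^ M`
has degree `Σ (α i - 2) = d + 1`. Truncating a power series at total degree `k` therefore hits
every class once `k ≥ d + 1`, while for `k = d` it hits exactly the kernel of the surjective
functional "coefficient of `x ^ M`", a hyperplane.
-/

open MvPolynomial

noncomputable section

theorem Finsupp.degree_strictMono {σ : Type*} :
    StrictMono (Finsupp.degree (σ := σ) (R := ℕ)) := by
  intro m M h
  obtain ⟨e, rfl⟩ := exists_add_of_le h.le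
  have he : e ≠ 0 := by rintro rfl; simp at h
  rw [map_add]
  have := (Finsupp.degree_eq_zero_iff e).not.mpr he
  omega

namespace MvPowerSeries

variable {σ R : Type*}

def boxIdeal (R : Type*) [CommSemiring R] (M : σ →₀ ℕ) : Ideal (MvPowerSeries σ R) :=
  Ideal.span (Set.range fun i => X i ^ (M i + 1))

theorem mem_boxIdeal_iff [CommSemiring R] [Fintype σ] {M : σ →₀ ℕ} {f : MvPowerSeries σ R} :
    f ∈ boxIdeal R M ↔ ∀ m ≤ M, coeff m f = 0 := by
  classical
  constructor
  · intro hf m hm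
    obtain ⟨c, rfl⟩ := Ideal.mem_span_range_iff_exists_fun.mp hf
    rw [map_sum]
    exact Finset.sum_eq_zero fun i _ =>
      X_pow_dvd_iff.mp (dvd_mul_left _ _) m (Nat.lt_succ_of_le (hm i))
  · intro hf
    -- Outside the box some exponent `m i` exceeds `M i`; assign the monomial to one such `i`.
    let owner (i : σ) (m : σ →₀ ℕ) : Prop := ∃ h : ∃ j, M j < m j, h.choose = i
    let part (i : σ) : MvPowerSeries σ R := fun m => if owner i m then coeff m f else 0
    have hpart : ∀ i, part i ∈ boxIdeal R M := by
      intro i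
      obtain ⟨c, hc⟩ := (X_pow_dvd_iff (s := i) (n := M i + 1) (φ := part i)).mpr fun m hm => by
        refine if_neg ?_
        rintro ⟨h, rfl⟩
        exact absurd h.choose_spec (by omega)
      rw [hc]
      exact Ideal.mul_mem_right _ _ (Ideal.subset_span ⟨i, rfl⟩)
    suffices f = ∑ i, part i from this ▸ Ideal.sum_mem _ fun i _ => hpart i
    ext m
    rw [map_sum]
    by_cases hm : m ≤ M
    · rw [hf m hm]
      refine (Finset.sum_eq_zero fun i _ => if_neg ?_).symm
      rintro ⟨⟨j, hj⟩, -⟩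
      exact absurd (hm j) (by omega)
    · have h : ∃ j, M j < m j := by simpa [Finsupp.le_def] using hm
      have howner : ∀ i, owner i m ↔ h.choose = i :=
        fun i => ⟨fun ⟨_, hi⟩ => hi, fun hi => ⟨h, hi⟩⟩
      change coeff m f = ∑ i, if owner i m then coeff m f else 0
      simp only [howner, Finset.sum_ite_eq, Finset.mem_univ, if_true]

section CommRing

variable [CommRing R] [Fintype σ]

def cornerCoeff (R : Type*) [CommRing R] (M : σ →₀ ℕ) :
    (MvPowerSeries σ R ⧸ boxIdeal R M) →ₗ[R] R :=
  Submodule.liftQ ((boxIdeal R M).restrictScalars R) (coeff M)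
      (fun _ hf => LinearMap.mem_ker.mpr (mem_boxIdeal_iff.mp hf M le_rfl)) ∘ₗ
    (Submodule.Quotient.restrictScalarsEquiv R (boxIdeal R M)).symm.toLinearMap

@[simp]
theorem cornerCoeff_mk (M : σ →₀ ℕ) (f : MvPowerSeries σ R) :
    cornerCoeff R M (Ideal.Quotient.mk (boxIdeal R M) f) = coeff M f :=
  rfl

theorem cornerCoeff_surjective (M : σ →₀ ℕ) : Function.Surjective (cornerCoeff R M) :=
  fun c => ⟨Ideal.Quotient.mk _ (monomial M c), by simp⟩

end CommRing

def restrictTotalDegreeMkQ [CommRing R] (I : Ideal (MvPowerSeries σ R)) (k : ℕ) :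
    restrictTotalDegree σ R k →ₗ[R] MvPowerSeries σ R ⧸ I :=
  (Ideal.Quotient.mkₐ R I).toLinearMap ∘ₗ (coeToMvPowerSeries.algHom R).toLinearMap ∘ₗ
    (restrictTotalDegree σ R k).subtype

@[simp]
theorem restrictTotalDegreeMkQ_apply [CommRing R] (I : Ideal (MvPowerSeries σ R)) (k : ℕ)
    (p : restrictTotalDegree σ R k) :
    restrictTotalDegreeMkQ I k p = Ideal.Quotient.mk I (p : MvPowerSeries σ R) := by
  simp [restrictTotalDegreeMkQ]

section Truncation

variable [CommRing R] [Fintype σ] {M : σ →₀ ℕ} {k : ℕ}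

theorem mk_mem_range_restrictTotalDegreeMkQ {f : MvPowerSeries σ R}
    (hf : ∀ m ≤ M, k < m.degree → coeff m f = 0) :
    Ideal.Quotient.mk (boxIdeal R M) f ∈
      LinearMap.range (restrictTotalDegreeMkQ (boxIdeal R M) k) := by
  have hdeg : truncTotal (k + 1) f ∈ restrictTotalDegree σ R k :=
    (mem_restrictTotalDegree _ _ _).mpr
      (Nat.lt_succ_iff.mp (totalDegree_truncTotal_lt _ k.succ_ne_zero))
  refine ⟨⟨_, hdeg⟩, ?_⟩
  rw [restrictTotalDegreeMkQ_apply, Ideal.Quotient.mk_eq_mk_iff_sub_mem, mem_boxIdeal_iff]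
  intro m hm
  rw [map_sub, MvPolynomial.coeff_coe, coeff_truncTotal_eq_ite]
  split_ifs with hk
  · exact sub_self _
  · rw [hf m hm (by omega), sub_zero]

theorem restrictTotalDegreeMkQ_surjective (h : M.degree ≤ k) :
    Function.Surjective (restrictTotalDegreeMkQ (boxIdeal R M) k) := by
  rw [← LinearMap.range_eq_top, eq_top_iff]
  rintro q -
  obtain ⟨f, rfl⟩ := Ideal.Quotient.mk_surjective q
  exact mk_mem_range_restrictTotalDegreeMkQ fun m hm hk =>
    absurd (Finsupp.degree_mono hm) (by omega)

theorem range_restrictTotalDegreeMkQ (h : k + 1 = M.degree) :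
    LinearMap.range (restrictTotalDegreeMkQ (boxIdeal R M) k) =
      LinearMap.ker (cornerCoeff R M) := by
  apply le_antisymm
  · rintro _ ⟨p, rfl⟩
    rw [LinearMap.mem_ker, restrictTotalDegreeMkQ_apply, cornerCoeff_mk, MvPolynomial.coeff_coe]
    refine MvPolynomial.coeff_eq_zero_of_totalDegree_lt ?_
    have := (mem_restrictTotalDegree _ _ _).mp p.2
    rw [← Finsupp.degree_apply]
    omega
  · intro q hq
    obtain ⟨f, rfl⟩ := Ideal.Quotient.mk_surjective q
    rw [LinearMap.mem_ker, cornerCoeff_mk] at hq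
    refine mk_mem_range_restrictTotalDegreeMkQ fun m hm hk => ?_
    obtain rfl | hlt := hm.eq_or_lt
    · exact hq
    · exact absurd (Finsupp.degree_strictMono hlt) (by omega)

theorem finrank_quotient_range_restrictTotalDegreeMkQ {K : Type*} [Field K]
    (h : k + 1 = M.degree) :
    Module.finrank K ((MvPowerSeries σ K ⧸ boxIdeal K M) ⧸
      LinearMap.range (restrictTotalDegreeMkQ (boxIdeal K M) k)) = 1 := by
  rw [range_restrictTotalDegreeMkQ h,
    ((cornerCoeff K M).quotKerEquivOfSurjective (cornerCoeff_surjective M)).finrank_eq,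
    Module.finrank_self]

end Truncation

end MvPowerSeries

open MvPowerSeries in
theorem statement_13_general {n : ℕ} (α : Fin n → ℕ) (hα2 : ∀ i, 2 ≤ α i)
    (d : ℕ) (hd : d + (2 * n + 1) = ∑ i, α i)
    (I : Ideal (MvPowerSeries (Fin n) ℂ))
    (hI : I = Ideal.span
      (Set.range fun i => (MvPowerSeries.X i : MvPowerSeries (Fin n) ℂ) ^ (α i - 1)))
    (L : (k : ℕ) → (restrictTotalDegree (Fin n) ℂ k) →ₗ[ℂ] (MvPowerSeries (Fin n) ℂ ⧸ I))
    (hL : ∀ (k : ℕ) (p : restrictTotalDegree (Fin n) ℂ k),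
      L k p = Ideal.Quotient.mk I
        ((p : MvPolynomial (Fin n) ℂ) : MvPowerSeries (Fin n) ℂ)) :
    Module.finrank ℂ ((MvPowerSeries (Fin n) ℂ ⧸ I) ⧸ LinearMap.range (L d)) = 1 ∧
    Function.Surjective (L (d + 1)) := by
  let M : Fin n →₀ ℕ := Finsupp.equivFunOnFinite.symm fun i => α i - 2
  have hIM : I = boxIdeal ℂ M := by
    rw [hI, boxIdeal]
    congr! 4 with i
    have := hα2 i
    change α i - 1 = α i - 2 + 1
    omega
  have hdegM : M.degree = d + 1 := by
    have : ∑ i, (α i - 2 + 2) = ∑ i, α i :=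
      Finset.sum_congr rfl fun i _ => by have := hα2 i; omega
    rw [Finset.sum_add_distrib] at this
    simp only [Finset.sum_const, Finset.card_univ, Fintype.card_fin, smul_eq_mul] at this
    rw [Finsupp.degree_eq_sum]
    change ∑ i, (α i - 2) = d + 1
    omega
  subst hIM
  obtain rfl : L = restrictTotalDegreeMkQ (boxIdeal ℂ M) :=
    funext fun k => LinearMap.ext fun p =>
      (hL k p).trans (restrictTotalDegreeMkQ_apply _ k p).symm
  exact ⟨finrank_quotient_range_restrictTotalDegreeMkQ hdegM.symm,
    restrictTotalDegreeMkQ_surjective hdegM.le⟩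

/-- For αᵢ ≥ 2 and d = (Σᵢ αᵢ) − (2n+1) ≥ 0, the ℂ-linear map from polynomials of total
degree ≤ d into ℂ[[x₁,…,xₙ]]/⟨x₁^{α₁−1},…,xₙ^{αₙ−1}⟩ (inclusion followed by the quotient
projection) has cokernel of dimension exactly 1, while the analogous map from polynomials
of total degree ≤ d+1 is surjective.  (This computes h¹(J_{Z^{ea}(H)/ℙⁿ}(d)) = 1 and
h¹(J_{Z^{ea}(H)/ℙⁿ}(d+1)) = 0 for the hypersurface H of Theorem 3.1.) -/
theorem statement_13 {n : ℕ} (hn : 1 ≤ n) (α : Fin n → ℕ) (hα2 : ∀ i, 2 ≤ α i)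
    (d : ℕ) (hd : d + (2 * n + 1) = ∑ i, α i)
    (I : Ideal (MvPowerSeries (Fin n) ℂ))
    (hI : I = Ideal.span
      (Set.range fun i => (MvPowerSeries.X i : MvPowerSeries (Fin n) ℂ) ^ (α i - 1)))
    (L : (k : ℕ) → (restrictTotalDegree (Fin n) ℂ k) →ₗ[ℂ] (MvPowerSeries (Fin n) ℂ ⧸ I))
    (hL : ∀ (k : ℕ) (p : restrictTotalDegree (Fin n) ℂ k),
      L k p = Ideal.Quotient.mk I
        ((p : MvPolynomial (Fin n) ℂ) : MvPowerSeries (Fin n) ℂ)) :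
    Module.finrank ℂ ((MvPowerSeries (Fin n) ℂ ⧸ I) ⧸ LinearMap.range (L d)) = 1 ∧
    Function.Surjective (L (d + 1)) :=
  statement_13_general α hα2 d hd I hI L hL
end
end
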